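/- Let β > 1 be a real number. If for every rational x ∈ [0,1) the greedy β-expansion of x (with digits d_n = ⌊β T_β^{n−1}(x)⌋ where T_β(y) = βy − ⌊βy⌋) is finite or eventually periodic, then β is a Pisot number or a Salem number. -/

import Mathlib

/-!
Digit sequences separate the points of `[0, 1)` (points sharing their first `n` digits are
`β⁻ⁿ`-close), so the hypothesis makes the `T_β`-orbit of every rational eventually periodic.
The polynomials `P₀ = x`, `Pₙ₊₁ = X Pₙ - dₙ` satisfy `Pₙ(β) = T_β^n x`. For `x = 1/2`,
`2 P_{k+ℓ} - 2 P_k` is monic with integer coefficients and vanishes at `β`, so `β` is an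
algebraic integer.

If `z` is a conjugate of `β` with `|z| > 1`, the relations `P_{k+jℓ}(β) = P_k(β)` hold at `z`
too, and since `Pₙ(z) = zⁿ (x - ∑_{i<n} dᵢ z^{-i-1})` this forces `∑ dᵢ(x) z^{-i-1} = x` for
every rational `x ∈ [0, 1)`. The left side is right-continuous in `x` (its partial sums are
locally constant to the right and converge uniformly), so the identity holds on all of `[0, 1)`;
comparing it at `u` and `T_β u` gives `z u = β u`, i.e. `z = β`.
-/

open Polynomial

/-- Strict lexicographic order on ℕ-indexed digit sequences:
`a` is lexicographically strictly less than `b`. -/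
def LexLt (a b : ℕ → ℕ) : Prop :=
  ∃ m : ℕ, (∀ i < m, a i = b i) ∧ a m < b m

/-- `a` (0-indexed: `a n` is the digit `a_{n+1}` of `β^{-(n+1)}`) is a β-expansion of 1. -/
def IsBetaExpansion (β : ℝ) (a : ℕ → ℕ) : Prop :=
  (∀ n, a n ≤ 1) ∧ HasSum (fun n => (a n : ℝ) / β ^ (n + 1)) 1

/-- `a` is the greedy (lexicographically largest) β-expansion of 1. -/
def IsGreedyExpansion (β : ℝ) (a : ℕ → ℕ) : Prop :=
  IsBetaExpansion β a ∧ ∀ b, IsBetaExpansion β b → b = a ∨ LexLt b a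

/-- A Pisot number: a real algebraic integer `q > 1` all of whose other conjugates
have modulus strictly less than 1. -/
def IsPisot (q : ℝ) : Prop :=
  1 < q ∧ IsIntegral ℤ q ∧
    ∀ z : ℂ, (Polynomial.aeval z) (minpoly ℤ q) = 0 → z ≠ (q : ℂ) → ‖z‖ < 1

/-- A Salem number: a real algebraic integer `α > 1` all of whose other conjugates
have modulus at most 1, with at least one conjugate of modulus exactly 1. -/
def IsSalem (α : ℝ) : Prop :=
  1 < α ∧ IsIntegral ℤ α ∧
    (∀ z : ℂ, (Polynomial.aeval z) (minpoly ℤ α) = 0 → z ≠ (α : ℂ) → ‖z‖ ≤ 1) ∧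
    (∃ z : ℂ, (Polynomial.aeval z) (minpoly ℤ α) = 0 ∧ ‖z‖ = 1)

/-- The shift map `σ(a_1 a_2 a_3 …) = a_2 a_3 …`. -/
def shiftSeq (a : ℕ → ℕ) : ℕ → ℕ := fun n => a (n + 1)

/-- The reversibly greedy condition for the length-`K` string `a_1 … a_K`
(0-indexed: `a 0, …, a (K-1)`): for all `0 ≤ i ≤ K-2`, the string
`a_{K-i} a_{K-i-1} … a_2` (padded with trailing zeros) is lexicographically
strictly smaller than `a_1 … a_K`. -/
def RevGreedy (a : ℕ → ℕ) (K : ℕ) : Prop :=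
  ∀ i ≤ K - 2,
    LexLt (fun n => if n ≤ K - i - 2 then a (K - i - 1 - n) else 0)
          (fun n => if n < K then a n else 0)

/-- `Pcomp a j` is `P_j(x) = x^j - a_1 x^{j-1} - ⋯ - a_j` (digits 0-indexed). -/
noncomputable def Pcomp (a : ℕ → ℕ) (j : ℕ) : Polynomial ℤ :=
  Polynomial.X ^ j - ∑ i ∈ Finset.range j, Polynomial.C ((a i : ℤ)) * Polynomial.X ^ (j - 1 - i)

/-- The eventually periodic digit sequence `first (w)^ω`. -/
def perSeq (first : ℕ) (w : List ℕ) : ℕ → ℕ :=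
  fun n => if n = 0 then first else w.getD ((n - 1) % w.length) 0

/-- The string `a_2 … a_K` (digits 0-indexed). -/
def strTail (a : ℕ → ℕ) (K : ℕ) : List ℕ :=
  List.ofFn fun i : Fin (K - 1) => a ((i : ℕ) + 1)

/-- The full string `a_1 … a_K` (digits 0-indexed). -/
def fullStr (a : ℕ → ℕ) (K : ℕ) : List ℕ :=
  List.ofFn fun i : Fin K => a (i : ℕ)

/-- The block `a_{k+1} … a_{k+ℓ}` (digits 0-indexed). -/
def perBlock (a : ℕ → ℕ) (k ℓ : ℕ) : List ℕ :=
  List.ofFn fun i : Fin ℓ => a (k + (i : ℕ))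

/-- Replace the last digit `a_K` of a finite expansion by `a_K - 1 = 0`. -/
def modLast (a : ℕ → ℕ) (K : ℕ) : ℕ → ℕ := fun i => if i = K - 1 then 0 else a i

/-- The β-transformation `T_β(y) = βy - ⌊βy⌋`. -/
noncomputable def betaT (β y : ℝ) : ℝ := β * y - ⌊β * y⌋

/-- The greedy digits of `x`: `d_{n+1} = ⌊β T_β^n(x)⌋`. -/
noncomputable def greedyDigit (β x : ℝ) (n : ℕ) : ℤ := ⌊β * (betaT β)^[n] x⌋

open Filter Topology Set Function

section BetaTransformation

variable {β : ℝ}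

theorem betaT_zero (β : ℝ) : betaT β 0 = 0 := by
  simp [betaT]

theorem iterate_betaT_succ (β x : ℝ) (n : ℕ) :
    (betaT β)^[n + 1] x = β * (betaT β)^[n] x - greedyDigit β x n := by
  rw [iterate_succ_apply']
  rfl

theorem greedyDigit_succ (β x : ℝ) (n : ℕ) :
    greedyDigit β x (n + 1) = greedyDigit β (betaT β x) n := by
  simp only [greedyDigit, iterate_succ_apply]

theorem greedyDigit_iterate_betaT (β x : ℝ) (k n : ℕ) :
    greedyDigit β ((betaT β)^[k] x) n = greedyDigit β x (n + k) := by
  simp only [greedyDigit, iterate_add_apply]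

theorem betaT_mem_Ico (β x : ℝ) : betaT β x ∈ Ico 0 1 :=
  ⟨Int.fract_nonneg _, Int.fract_lt_one _⟩

theorem iterate_betaT_mem_Ico {x : ℝ} (hx : x ∈ Ico 0 1) :
    ∀ n, (betaT β)^[n] x ∈ Ico (0 : ℝ) 1
  | 0 => hx
  | n + 1 => by
    rw [iterate_succ_apply']
    exact betaT_mem_Ico β _

theorem greedyDigit_nonneg (hβ : 0 ≤ β) {x : ℝ} (hx : x ∈ Ico 0 1) (n : ℕ) :
    0 ≤ greedyDigit β x n :=
  Int.floor_nonneg.2 (mul_nonneg hβ (iterate_betaT_mem_Ico hx n).1)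

theorem greedyDigit_le (hβ : 0 ≤ β) {x : ℝ} (hx : x ∈ Ico 0 1) (n : ℕ) :
    (greedyDigit β x n : ℝ) ≤ β :=
  (Int.floor_le _).trans (mul_le_of_le_one_right hβ (iterate_betaT_mem_Ico hx n).2.le)

theorem iterate_betaT_sub_iterate_betaT {u w : ℝ} {n : ℕ}
    (h : ∀ i < n, greedyDigit β u i = greedyDigit β w i) :
    (betaT β)^[n] u - (betaT β)^[n] w = β ^ n * (u - w) := by
  induction n with
  | zero => simp
  | succ n ih =>
    rw [iterate_betaT_succ, iterate_betaT_succ, h n n.lt_succ_self, pow_succ]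
    linear_combination β * ih fun i hi => h i (hi.trans n.lt_succ_self)

theorem eq_of_greedyDigit_eq (hβ : 1 < β) {u w : ℝ} (hu : u ∈ Ico 0 1) (hw : w ∈ Ico 0 1)
    (h : ∀ n, greedyDigit β u n = greedyDigit β w n) : u = w := by
  by_contra hne
  have hpos : 0 < |u - w| := abs_pos.2 (sub_ne_zero.2 hne)
  obtain ⟨n, hn⟩ := pow_unbounded_of_one_lt (|u - w|)⁻¹ hβ
  have hlt : |(betaT β)^[n] u - (betaT β)^[n] w| < 1 := by
    obtain ⟨hu0, hu1⟩ := iterate_betaT_mem_Ico hu n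
    obtain ⟨hw0, hw1⟩ := iterate_betaT_mem_Ico hw n
    rw [abs_sub_lt_iff]
    constructor <;> linarith
  rw [iterate_betaT_sub_iterate_betaT fun i _ => h i, abs_mul,
    abs_of_pos (pow_pos (one_pos.trans hβ) n)] at hlt
  linarith [(inv_lt_iff_one_lt_mul₀ hpos).1 hn]

theorem exists_iterate_mem_periodicPts (hβ : 1 < β) {x : ℝ} (hx : x ∈ Ico 0 1)
    (h : (∃ k : ℕ, ∀ n, k ≤ n → greedyDigit β x n = 0) ∨
      (∃ k ℓ : ℕ, 1 ≤ ℓ ∧ ∀ n, k ≤ n → greedyDigit β x (n + ℓ) = greedyDigit β x n)) :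
    ∃ k, (betaT β)^[k] x ∈ periodicPts (betaT β) := by
  rcases h with ⟨k, hk⟩ | ⟨k, ℓ, hℓ, hk⟩
  · have hzero : (betaT β)^[k] x = 0 := by
      refine eq_of_greedyDigit_eq hβ (iterate_betaT_mem_Ico hx k) ⟨le_rfl, one_pos⟩ fun n => ?_
      rw [greedyDigit_iterate_betaT, hk _ (Nat.le_add_left k n), greedyDigit,
        iterate_fixed (betaT_zero β), mul_zero, Int.floor_zero]
    exact ⟨k, mk_mem_periodicPts one_pos (hzero ▸ betaT_zero β)⟩
  · refine ⟨k, mk_mem_periodicPts hℓ ?_⟩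
    refine eq_of_greedyDigit_eq hβ (iterate_betaT_mem_Ico (iterate_betaT_mem_Ico hx k) ℓ)
      (iterate_betaT_mem_Ico hx k) fun n => ?_
    rw [greedyDigit_iterate_betaT, greedyDigit_iterate_betaT, greedyDigit_iterate_betaT,
      add_right_comm, hk _ (Nat.le_add_left k n)]

end BetaTransformation

/-- Taken along the greedy digits of `x`, `Pₙ(β) = T_β^n x`. -/
noncomputable def orbitPoly {R : Type*} [CommRing R] (x : R) (d : ℕ → R) : ℕ → R[X]
  | 0 => C x
  | n + 1 => X * orbitPoly x d n - C (d n)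

section OrbitPoly

variable {R A : Type*} [CommRing R] [CommRing A] [Algebra R A]

theorem aeval_orbitPoly {x : R} {d : ℕ → R} {a : A} {y : ℕ → A} (h0 : y 0 = algebraMap R A x)
    (hsucc : ∀ n, y (n + 1) = a * y n - algebraMap R A (d n)) (n : ℕ) :
    aeval a (orbitPoly x d n) = y n := by
  induction n with
  | zero => simp [orbitPoly, h0]
  | succ n ih => simp [orbitPoly, ih, hsucc]

theorem orbitPoly_one_monic [Nontrivial R] (d : ℕ → R) (n : ℕ) :
    (orbitPoly 1 d n).Monic ∧ (orbitPoly 1 d n).degree = n := by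
  induction n with
  | zero => simp [orbitPoly]
  | succ n ih =>
    have hX : (X * orbitPoly 1 d n).degree = ((n + 1 : ℕ) : WithBot ℕ) := by
      rw [X_mul, degree_mul_X, ih.2, Nat.cast_succ]
    have hC : (C (d n)).degree < (X * orbitPoly 1 d n).degree :=
      hX ▸ degree_C_le.trans_lt (by exact_mod_cast n.succ_pos)
    exact ⟨(monic_X.mul ih.1).sub_of_left hC,
      by rw [orbitPoly, degree_sub_eq_left_of_degree_lt hC, hX]⟩

theorem isIntegral_of_orbit_eq {a : A} {y : ℕ → A} {d : ℕ → ℤ} (h0 : y 0 = 1)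
    (hsucc : ∀ n, y (n + 1) = a * y n - d n) {k ℓ : ℕ} (hℓ : 0 < ℓ) (hper : y (k + ℓ) = y k) :
    IsIntegral ℤ a := by
  have hy : ∀ n, aeval a (orbitPoly 1 d n) = y n :=
    aeval_orbitPoly (by simp [h0]) (by simpa using hsucc)
  refine ⟨orbitPoly 1 d (k + ℓ) - orbitPoly 1 d k, ?_, ?_⟩
  · refine (orbitPoly_one_monic d (k + ℓ)).1.sub_of_left ?_
    rw [(orbitPoly_one_monic d (k + ℓ)).2, (orbitPoly_one_monic d k).2]
    exact_mod_cast Nat.lt_add_of_pos_right hℓ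
  · rw [← aeval_def, map_sub, hy, hy, hper, sub_self]

end OrbitPoly

theorem isIntegral_of_iterate_mem_periodicPts {β x : ℝ} {q : ℤ} (hqx : q * x = 1) {k : ℕ}
    (hk : (betaT β)^[k] x ∈ periodicPts (betaT β)) : IsIntegral ℤ β := by
  obtain ⟨ℓ, hℓ, hper⟩ := mem_periodicPts.1 hk
  refine isIntegral_of_orbit_eq (y := fun n => q * (betaT β)^[n] x)
    (d := fun n => q * greedyDigit β x n) (k := k) hqx (fun n => ?_) hℓ ?_
  · rw [iterate_betaT_succ]
    push_cast
    ring
  · rw [add_comm, iterate_add_apply, hper.isFixedPt.eq]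

theorem aeval_eq_of_aeval_minpoly_eq_zero {K A B : Type*} [Field K] [Ring A] [Algebra K A]
    [CommRing B] [Algebra K B] {a : A} {b : B} (hb : aeval b (minpoly K a) = 0) {p q : K[X]}
    (h : aeval a p = aeval a q) : aeval b p = aeval b q := by
  rw [← sub_eq_zero, ← map_sub] at h ⊢
  exact aeval_eq_zero_of_dvd_aeval_eq_zero (minpoly.dvd K a h) hb

section DigitSeries

variable {β : ℝ} {z : ℂ}

theorem eventually_greedyDigit_eq (hβ : 0 ≤ β) (u : ℝ) (n : ℕ) :
    ∀ᶠ u' in 𝓝[≥] u, ∀ i < n, greedyDigit β u' i = greedyDigit β u i := by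
  induction n with
  | zero => simp
  | succ n ih =>
    have hlin : ∀ᶠ u' in 𝓝[≥] u, β * (betaT β)^[n] u' =
        β * (betaT β)^[n] u + β ^ (n + 1) * (u' - u) :=
      ih.mono fun u' h => by
        linear_combination β * iterate_betaT_sub_iterate_betaT (β := β) h
    have htends : Tendsto (fun u' => β * (betaT β)^[n] u') (𝓝[≥] u)
        (𝓝[≥] (β * (betaT β)^[n] u)) := by
      refine Tendsto.congr' (hlin.mono fun _ h => h.symm) (tendsto_nhdsWithin_iff.2 ⟨?_, ?_⟩)
      · exact tendsto_nhdsWithin_of_tendsto_nhds ((by fun_prop : Continuous fun u' : ℝ =>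
          β * (betaT β)^[n] u + β ^ (n + 1) * (u' - u)).tendsto' u _ (by simp))
      · filter_upwards [self_mem_nhdsWithin] with u' hu'
        have : 0 ≤ β ^ (n + 1) * (u' - u) := mul_nonneg (pow_nonneg hβ _) (sub_nonneg.2 hu')
        simpa using this
    filter_upwards [ih, htends.eventually (tendsto_pure.1 (tendsto_floor_right_pure_floor _))]
      with u' h hn i hi
    rcases Nat.lt_succ_iff_lt_or_eq.1 hi with hi | rfl
    · exact h i hi
    · exact hn

theorem norm_greedyDigit_div_pow_le (hβ : 0 ≤ β) {u : ℝ} (hu : u ∈ Ico 0 1) (i : ℕ) :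
    ‖(greedyDigit β u i : ℂ) / z ^ (i + 1)‖ ≤ β * ‖z‖⁻¹ ^ (i + 1) := by
  rw [norm_div, norm_pow, Complex.norm_intCast, inv_pow, ← div_eq_mul_inv,
    abs_of_nonneg (Int.cast_nonneg (greedyDigit_nonneg hβ hu i))]
  gcongr
  exact greedyDigit_le hβ hu i

theorem summable_mul_inv_norm_pow_succ (β : ℝ) (hz : 1 < ‖z‖) :
    Summable fun i : ℕ => β * ‖z‖⁻¹ ^ (i + 1) :=
  ((summable_nat_add_iff 1).2 (summable_geometric_of_lt_one (by positivity)
    (inv_lt_one_of_one_lt₀ hz))).mul_left β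

noncomputable def digitSeries (β : ℝ) (z : ℂ) (u : ℝ) : ℂ :=
  ∑' i, (greedyDigit β u i : ℂ) / z ^ (i + 1)

theorem summable_greedyDigit_div_pow (hβ : 0 ≤ β) (hz : 1 < ‖z‖) {u : ℝ} (hu : u ∈ Ico 0 1) :
    Summable fun i => (greedyDigit β u i : ℂ) / z ^ (i + 1) :=
  .of_norm_bounded (summable_mul_inv_norm_pow_succ β hz) (norm_greedyDigit_div_pow_le hβ hu)

theorem mul_digitSeries (hβ : 0 ≤ β) (hz : 1 < ‖z‖) {u : ℝ} (hu : u ∈ Ico 0 1) :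
    z * digitSeries β z u = greedyDigit β u 0 + digitSeries β z (betaT β u) := by
  have hz0 : z ≠ 0 := norm_pos_iff.1 (one_pos.trans hz)
  rw [digitSeries, (summable_greedyDigit_div_pow hβ hz hu).tsum_eq_zero_add, mul_add,
    digitSeries, ← tsum_mul_left]
  congr 1
  · field_simp
    ring
  · refine tsum_congr fun i => ?_
    rw [greedyDigit_succ, pow_succ]
    field_simp

theorem continuousWithinAt_digitSeries (hβ : 0 ≤ β) (hz : 1 < ‖z‖) {u : ℝ}
    (hu : u ∈ Ico 0 1) : ContinuousWithinAt (digitSeries β z) (Ico u 1) u := by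
  have hunif : TendstoUniformlyOn
      (fun m u' => ∑ i ∈ Finset.range m, (greedyDigit β u' i : ℂ) / z ^ (i + 1))
      (digitSeries β z) atTop (Ico u 1) :=
    tendstoUniformlyOn_tsum_nat (summable_mul_inv_norm_pow_succ β hz) fun i u' hu' =>
      norm_greedyDigit_div_pow_le hβ ⟨hu.1.trans hu'.1, hu'.2⟩ i
  refine continuousWithinAt_of_locally_uniform_approx_of_continuousWithinAt ⟨le_rfl, hu.2⟩
    fun V hV => ?_
  obtain ⟨m, hm⟩ := (hunif V hV).exists
  refine ⟨Ico u 1, self_mem_nhdsWithin, _,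
    continuousWithinAt_const.congr_of_eventuallyEq ?_ rfl, hm⟩
  filter_upwards [nhdsWithin_mono u Ico_subset_Ici_self (eventually_greedyDigit_eq hβ u m)]
    with u' hu'
  exact Finset.sum_congr rfl fun i hi => by rw [hu' i (Finset.mem_range.1 hi)]

end DigitSeries

section Conjugates

variable {β : ℝ} {z : ℂ}

theorem digitSeries_eq_self_of_mem_periodicPts (hβ : 0 ≤ β) (hz : 1 < ‖z‖)
    (hzβ : aeval z (minpoly ℚ β) = 0) {x : ℚ} (hx : (x : ℝ) ∈ Ico 0 1) {k : ℕ}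
    (hk : (betaT β)^[k] x ∈ periodicPts (betaT β)) :
    digitSeries β z x = x := by
  obtain ⟨ℓ, hℓ, hper⟩ := mem_periodicPts.1 hk
  have hz0 : z ≠ 0 := norm_pos_iff.1 (one_pos.trans hz)
  set S : ℕ → ℂ := fun n => ∑ i ∈ Finset.range n, (greedyDigit β x i : ℂ) / z ^ (i + 1)
  set P := orbitPoly (x : ℚ) fun i => (greedyDigit β x i : ℚ)
  have hPβ : ∀ n, aeval β (P n) = (betaT β)^[n] x :=
    aeval_orbitPoly (by simp) fun n => by simp [iterate_betaT_succ]
  have hPz : ∀ n, aeval z (P n) = z ^ n * (x - S n) :=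
    aeval_orbitPoly (by simp [S]) fun n => by
      simp only [S, Finset.sum_range_succ, map_intCast]
      field_simp
      ring
  have hsub : ∀ j : ℕ, (x : ℂ) - S (k + j * ℓ) = aeval z (P k) * z⁻¹ ^ (k + j * ℓ) := by
    intro j
    have hβj : aeval β (P (k + j * ℓ)) = aeval β (P k) := by
      rw [hPβ, hPβ, add_comm, iterate_add_apply, (hper.const_mul j).isFixedPt.eq]
    rw [← aeval_eq_of_aeval_minpoly_eq_zero hzβ hβj, hPz, inv_pow]
    field_simp
  have htimes : Tendsto (fun j : ℕ => k + j * ℓ) atTop atTop :=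
    tendsto_atTop_mono (fun j => le_add_left (Nat.le_mul_of_pos_right j hℓ)) tendsto_id
  have hzero : Tendsto (fun j : ℕ => (x : ℂ) - S (k + j * ℓ)) atTop (𝓝 0) := by
    have hpow : Tendsto (fun n : ℕ => z⁻¹ ^ n) atTop (𝓝 0) :=
      tendsto_pow_atTop_nhds_zero_of_norm_lt_one (by rw [norm_inv]; exact inv_lt_one_of_one_lt₀ hz)
    have := (hpow.comp htimes).const_mul (aeval z (P k))
    rw [mul_zero] at this
    exact this.congr fun j => (hsub j).symm
  have hlim : Tendsto (fun j : ℕ => (x : ℂ) - S (k + j * ℓ)) atTop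
      (𝓝 (x - digitSeries β z x)) :=
    tendsto_const_nhds.sub
      ((summable_greedyDigit_div_pow hβ hz hx).hasSum.tendsto_sum_nat.comp htimes)
  have := tendsto_nhds_unique hlim hzero
  rw [sub_eq_zero] at this
  exact_mod_cast this.symm

theorem digitSeries_eq_self (hβ : 0 ≤ β) (hz : 1 < ‖z‖)
    (hrat : ∀ x : ℚ, (x : ℝ) ∈ Ico 0 1 → digitSeries β z x = x) {u : ℝ} (hu : u ∈ Ico 0 1) :
    digitSeries β z u = u := by
  set s := Ico u 1 ∩ range ((↑) : ℚ → ℝ)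
  have hcont : ContinuousWithinAt (fun y => digitSeries β z y - y) s u :=
    ((continuousWithinAt_digitSeries hβ hz hu).sub
      Complex.continuous_ofReal.continuousWithinAt).mono inter_subset_left
  have hmaps : MapsTo (fun y => digitSeries β z y - y) s {0} := by
    rintro _ ⟨hy, x, rfl⟩
    simp [hrat x ⟨hu.1.trans hy.1, hy.2⟩]
  have hclos : u ∈ closure s := by
    refine Metric.mem_closure_iff.2 fun ε hε => ?_
    obtain ⟨x, hx1, hx2⟩ := exists_rat_btwn (lt_min (lt_add_of_pos_right u hε) hu.2)
    refine ⟨x, ⟨⟨hx1.le, hx2.trans_le (min_le_right _ _)⟩, x, rfl⟩, ?_⟩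
    rw [Real.dist_eq, abs_sub_lt_iff]
    constructor <;> linarith [min_le_left (u + ε) 1]
  simpa [sub_eq_zero] using hcont.mem_closure hclos hmaps

theorem eq_of_aeval_minpoly_eq_zero_of_one_lt_norm (hβ : 1 < β)
    (hper : ∀ x : ℚ, (x : ℝ) ∈ Ico 0 1 → ∃ k, (betaT β)^[k] x ∈ periodicPts (betaT β))
    (hzβ : aeval z (minpoly ℚ β) = 0) (hz : 1 < ‖z‖) : z = β := by
  have hβ0 : 0 ≤ β := by linarith
  have hF : ∀ u ∈ Ico (0 : ℝ) 1, digitSeries β z u = u := fun u hu =>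
    digitSeries_eq_self hβ0 hz (fun x hx => (hper x hx).elim fun _ hk =>
      digitSeries_eq_self_of_mem_periodicPts hβ0 hz hzβ hx hk) hu
  have hhalf : (1 / 2 : ℝ) ∈ Ico 0 1 := by norm_num
  have key := mul_digitSeries hβ0 hz hhalf
  rw [hF _ hhalf, hF _ (betaT_mem_Ico β _)] at key
  simp only [betaT, greedyDigit, iterate_zero_apply] at key
  push_cast at key
  linear_combination 2 * key

end Conjugates

theorem isPisot_or_isSalem_of_eq_of_one_lt_norm {α : ℝ} (hα : 1 < α) (hint : IsIntegral ℤ α)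
    (h : ∀ z : ℂ, aeval z (minpoly ℤ α) = 0 → 1 < ‖z‖ → z = α) : IsPisot α ∨ IsSalem α := by
  have hle : ∀ z : ℂ, aeval z (minpoly ℤ α) = 0 → z ≠ α → ‖z‖ ≤ 1 :=
    fun z hz hne => not_lt.1 fun h1 => hne (h z hz h1)
  by_cases hone : ∃ z : ℂ, aeval z (minpoly ℤ α) = 0 ∧ ‖z‖ = 1
  · exact .inr ⟨hα, hint, hle, hone⟩
  · simp only [not_exists, not_and] at hone
    exact .inl ⟨hα, hint, fun z hz hne => (hle z hz hne).lt_of_ne (hone z hz)⟩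

/-- Schmidt: if for every rational `x ∈ [0,1)` the greedy β-expansion of
`x` (digits `d_n = ⌊β T_β^{n-1}(x)⌋`) is finite or eventually periodic, then `β` is a
Pisot or a Salem number. -/
theorem stmt6 (β : ℝ) (hβ : 1 < β)
    (h : ∀ x : ℚ, 0 ≤ x → x < 1 →
      (∃ k : ℕ, ∀ n, k ≤ n → greedyDigit β (x : ℝ) n = 0) ∨
      (∃ k ℓ : ℕ, 1 ≤ ℓ ∧ ∀ n, k ≤ n →
        greedyDigit β (x : ℝ) (n + ℓ) = greedyDigit β (x : ℝ) n)) :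
    IsPisot β ∨ IsSalem β := by
  have hper : ∀ x : ℚ, (x : ℝ) ∈ Ico 0 1 → ∃ k, (betaT β)^[k] x ∈ periodicPts (betaT β) :=
    fun x hx => exists_iterate_mem_periodicPts hβ hx
      (h x (by exact_mod_cast hx.1) (by exact_mod_cast hx.2))
  obtain ⟨k, hk⟩ := hper (1 / 2) (by norm_num)
  have hint : IsIntegral ℤ β := isIntegral_of_iterate_mem_periodicPts (q := 2) (by norm_num) hk
  refine isPisot_or_isSalem_of_eq_of_one_lt_norm hβ hint fun z hz hz1 =>
    eq_of_aeval_minpoly_eq_zero_of_one_lt_norm hβ hper ?_ hz1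
  rwa [minpoly.isIntegrallyClosed_eq_field_fractions' ℚ hint, aeval_map_algebraMap]
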